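/- arXiv:1906.02649 — 2 statements merged into one kernel-verified Lean document; each statement's English description precedes it below -/
import Mathlib

section
/- Let W be an N×N real matrix with nonnegative entries that is weight-balanced, with Laplacian L = D − W, and assume d_i > 0 for all i. Let x̂, e ∈ ℝᴺ with x = x̂ − e, and let σ_1,…,σ_N ∈ (0,1). If the Algorithm-1 triggering condition e_i² ≤ (σ_i/(4 d_i)) Σ_{j=1}^N w_{ij}(x̂_i − x̂_j)² holds for every i, then −xᵀL x̂ ≤ −(1/4) Σ_{i=1}^N (1 − σ_i) Σ_{j=1}^N w_{ij}(x̂_i − x̂_j)² ≤ 0; i.e. the Lyapunov function V₁(x) = (1/2)(x − x̄)ᵀ(x − x̄) is nonincreasing along the dynamics ẋ = −L x̂. -/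
/-!
For a weight-balanced `W` the quadratic form of the Laplacian is half the total disagreement,
`x̂ᵀLx̂ = ½ ∑ᵢⱼ wᵢⱼ(x̂ᵢ − x̂ⱼ)²`. The error term `eᵀLx̂` is bounded node by node with Young's
inequality `eᵢ(x̂ᵢ − x̂ⱼ) ≤ eᵢ² + (x̂ᵢ − x̂ⱼ)²/4`, and the trigger turns the resulting `dᵢeᵢ²` into
`(σᵢ/4) ∑ⱼ wᵢⱼ(x̂ᵢ − x̂ⱼ)²`; subtracting leaves `−¼ ∑ᵢ (1 − σᵢ) ∑ⱼ wᵢⱼ(x̂ᵢ − x̂ⱼ)²`.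
-/

open Matrix Finset

/-- The out-degree of node `i`: the `i`-th row sum of the weight matrix. -/
def outDeg {N : ℕ} (W : Matrix (Fin N) (Fin N) ℝ) (i : Fin N) : ℝ := ∑ j, W i j

/-- `W` is weight-balanced if every row sum equals the corresponding column sum. -/
def IsWeightBalanced {N : ℕ} (W : Matrix (Fin N) (Fin N) ℝ) : Prop :=
  ∀ i, (∑ j, W i j) = ∑ j, W j i

/-- The Laplacian `L = D − W`. -/
noncomputable def lap {N : ℕ} (W : Matrix (Fin N) (Fin N) ℝ) : Matrix (Fin N) (Fin N) ℝ :=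
  Matrix.diagonal (outDeg W) - W

lemma lap_mulVec_apply {N : ℕ} (W : Matrix (Fin N) (Fin N) ℝ) (x : Fin N → ℝ) (i : Fin N) :
    (lap W *ᵥ x) i = ∑ j, W i j * (x i - x j) := by
  rw [lap, sub_mulVec, Pi.sub_apply, mulVec_diagonal, outDeg, sum_mul, mulVec, dotProduct,
    ← sum_sub_distrib]
  simp only [mul_sub]

lemma IsWeightBalanced.sum_sum_mul_col {N : ℕ} {W : Matrix (Fin N) (Fin N) ℝ}
    (hWB : IsWeightBalanced W) (f : Fin N → ℝ) :
    ∑ i, ∑ j, W i j * f j = ∑ i, ∑ j, W i j * f i := by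
  rw [sum_comm]
  refine sum_congr rfl fun i _ => ?_
  rw [← sum_mul, ← sum_mul, hWB i]

lemma IsWeightBalanced.dotProduct_lap_mulVec_self {N : ℕ} {W : Matrix (Fin N) (Fin N) ℝ}
    (hWB : IsWeightBalanced W) (x : Fin N → ℝ) :
    x ⬝ᵥ (lap W *ᵥ x) = 1 / 2 * ∑ i, ∑ j, W i j * (x i - x j) ^ 2 := by
  have hcol := hWB.sum_sum_mul_col (fun j => x j ^ 2)
  have hsplit : ∑ i, ∑ j, W i j * (x i - x j) ^ 2 =
      2 * ∑ i, ∑ j, W i j * (x i * (x i - x j)) +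
        (∑ i, ∑ j, W i j * x j ^ 2 - ∑ i, ∑ j, W i j * x i ^ 2) := by
    simp only [mul_sum, ← sum_sub_distrib, ← sum_add_distrib]
    exact sum_congr rfl fun i _ => sum_congr rfl fun j _ => by ring
  rw [hsplit, hcol, sub_self, add_zero, ← mul_assoc, one_div_mul_cancel two_ne_zero, one_mul]
  simp only [dotProduct, lap_mulVec_apply, mul_sum]
  exact sum_congr rfl fun i _ => sum_congr rfl fun j _ => by ring

lemma mul_sum_mul_le_sum_mul_sq_add {ι : Type*} (s : Finset ι) {w : ι → ℝ}
    (hw : ∀ j ∈ s, 0 ≤ w j) (a : ℝ) (y : ι → ℝ) :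
    a * ∑ j ∈ s, w j * y j ≤ (∑ j ∈ s, w j) * a ^ 2 + 1 / 4 * ∑ j ∈ s, w j * y j ^ 2 := by
  simp only [mul_sum, sum_mul, ← sum_add_distrib]
  exact sum_le_sum fun j hj => by nlinarith [mul_nonneg (hw j hj) (sq_nonneg (a - y j / 2))]

lemma mul_lap_mulVec_apply_le_of_trigger {N : ℕ} {W : Matrix (Fin N) (Fin N) ℝ} {i : Fin N}
    (hW : ∀ j, 0 ≤ W i j) (hd : 0 < outDeg W i) {x e : Fin N → ℝ} {σ : ℝ}
    (htrig : e i ^ 2 ≤ σ / (4 * outDeg W i) * ∑ j, W i j * (x i - x j) ^ 2) :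
    e i * (lap W *ᵥ x) i ≤ (σ + 1) / 4 * ∑ j, W i j * (x i - x j) ^ 2 := by
  have hdeg : outDeg W i * e i ^ 2 ≤ σ / 4 * ∑ j, W i j * (x i - x j) ^ 2 := by
    calc outDeg W i * e i ^ 2
        ≤ outDeg W i * (σ / (4 * outDeg W i) * ∑ j, W i j * (x i - x j) ^ 2) :=
          mul_le_mul_of_nonneg_left htrig hd.le
      _ = σ / 4 * ∑ j, W i j * (x i - x j) ^ 2 := by field_simp
  have hyoung := mul_sum_mul_le_sum_mul_sq_add univ (fun j _ => hW j) (e i) (fun j => x i - x j)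
  rw [← outDeg] at hyoung
  rw [lap_mulVec_apply]
  linarith

/-- under the Algorithm-1 trigger `eᵢ² ≤ (σᵢ/(4dᵢ)) ∑ⱼ wᵢⱼ(x̂ᵢ − x̂ⱼ)²`,
`−xᵀLx̂ ≤ −(1/4) ∑ᵢ (1 − σᵢ) ∑ⱼ wᵢⱼ(x̂ᵢ − x̂ⱼ)² ≤ 0` (so `V₁` is nonincreasing). -/
theorem stmt4 {N : ℕ} (W : Matrix (Fin N) (Fin N) ℝ) (hW : ∀ i j, 0 ≤ W i j)
    (hWB : IsWeightBalanced W) (hd : ∀ i, 0 < outDeg W i)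
    (xh e : Fin N → ℝ) (σ : Fin N → ℝ) (hσ : ∀ i, σ i ∈ Set.Ioo (0 : ℝ) 1)
    (htrig : ∀ i, e i^2 ≤ (σ i / (4 * outDeg W i)) * ∑ j, W i j * (xh i - xh j)^2) :
    -((xh - e) ⬝ᵥ (lap W *ᵥ xh)) ≤
        -(1/4) * ∑ i, (1 - σ i) * ∑ j, W i j * (xh i - xh j)^2 ∧
      -(1/4) * ∑ i, (1 - σ i) * ∑ j, W i j * (xh i - xh j)^2 ≤ 0 := by
  set S : Fin N → ℝ := fun i => ∑ j, W i j * (xh i - xh j) ^ 2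
  have herr : e ⬝ᵥ (lap W *ᵥ xh) ≤ ∑ i, (σ i + 1) / 4 * S i :=
    sum_le_sum fun i _ => mul_lap_mulVec_apply_le_of_trigger (hW i) (hd i) (htrig i)
  have hsplit : -(1 / 4) * ∑ i, (1 - σ i) * S i =
      ∑ i, (σ i + 1) / 4 * S i - 1 / 2 * ∑ i, S i := by
    simp only [mul_sum, ← sum_sub_distrib]
    exact sum_congr rfl fun i _ => by ring
  have hS_nonneg : ∀ i, 0 ≤ S i := fun i => sum_nonneg fun j _ => mul_nonneg (hW i j) (sq_nonneg _)
  have hdissip : 0 ≤ ∑ i, (1 - σ i) * S i :=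
    sum_nonneg fun i _ => mul_nonneg (sub_nonneg.2 (hσ i).2.le) (hS_nonneg i)
  refine ⟨?_, by linarith⟩
  rw [sub_dotProduct, hWB.dotProduct_lap_mulVec_self, hsplit]
  linarith
end

section
/- (Theorem 1, algebraic core: strict Lyapunov decay rate.) Let W be an N×N real matrix with nonnegative entries that is weight-balanced, with Laplacian L = D − W, and assume d_i > 0 for all i. Let x̂, e ∈ ℝᴺ, x = x̂ − e, u = −L x̂. Let b_i, c_i > 0, δ_i = 1 − d_i b_i/2 − Σ_j w_{ij} c_j/2 with δ_i > 0, and σ_i ∈ (0,1). Assume the Algorithm-2 triggering condition e_i² ≤ K_i u_i² holds for every i, where K_i = 2 σ_i δ_i b_i c_i / ((b_i + c_i) d_i), and assume there exist μ, Λ > 0 with μ x̂ᵀL x̂ ≤ ‖L x̂‖² ≤ Λ x̂ᵀL x̂. Let K = max_i K_i, m = min_i (1 − σ_i) δ_i, and A = − m μ / (1 + ‖L‖ K Λ) < 0, where ‖L‖ is the operator norm of L induced by the Euclidean norm. Then xᵀLᵀu ≤ A · (1/2) xᵀL x; that is, the derivative of the Lyapunov function V₂(x) = (1/2) xᵀLᵀx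 along the event-triggered dynamics ẋ = u satisfies V̇₂ ≤ A V₂. -/
open Matrix Finset

/-- `δᵢ = 1 − dᵢ bᵢ/2 − ∑ⱼ wᵢⱼ cⱼ/2`. -/
noncomputable def delta {N : ℕ} (W : Matrix (Fin N) (Fin N) ℝ) (b c : Fin N → ℝ)
    (i : Fin N) : ℝ :=
  1 - outDeg W i * b i / 2 - (∑ j, W i j * c j) / 2
/-- The operator norm of a matrix induced by the Euclidean norm on `ℝᴺ`. -/
noncomputable def opNorm {N : ℕ} (L : Matrix (Fin N) (Fin N) ℝ) : ℝ :=
  ‖Matrix.toEuclideanCLM (𝕜 := ℝ) L‖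

lemma lap_mulVec {N : ℕ} (W : Matrix (Fin N) (Fin N) ℝ) (v : Fin N → ℝ) (i : Fin N) :
    (lap W *ᵥ v) i = outDeg W i * v i - ∑ j, W i j * v j := by
  simp only [lap, Matrix.sub_mulVec, Pi.sub_apply, Matrix.mulVec_diagonal]
  rfl

lemma key_swap {N : ℕ} (W : Matrix (Fin N) (Fin N) ℝ) (hWB : IsWeightBalanced W)
    (f : Fin N → ℝ) : ∑ i, ∑ j, W i j * f j = ∑ i, ∑ j, W i j * f i := by
  rw [Finset.sum_comm]
  refine Finset.sum_congr rfl fun j _ => ?_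
  rw [← Finset.sum_mul, ← hWB j, Finset.sum_mul]

lemma quad_eq {N : ℕ} (W : Matrix (Fin N) (Fin N) ℝ) (hWB : IsWeightBalanced W)
    (v : Fin N → ℝ) :
    v ⬝ᵥ (lap W *ᵥ v) = (1/2) * ∑ i, ∑ j, W i j * (v i - v j)^2 := by
  have key := key_swap W hWB (fun t => v t * v t)
  have L1 : v ⬝ᵥ (lap W *ᵥ v)
      = ∑ i, ∑ j, (W i j * (v i * v i) - W i j * (v i * v j)) := by
    simp only [dotProduct, lap_mulVec, outDeg]
    refine Finset.sum_congr rfl fun i _ => ?_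
    rw [Finset.sum_sub_distrib, mul_sub]
    congr 1
    · rw [Finset.sum_mul, Finset.mul_sum]
      exact Finset.sum_congr rfl fun j _ => by ring
    · rw [Finset.mul_sum]
      exact Finset.sum_congr rfl fun j _ => by ring
  have R1 : ∑ i, ∑ j, W i j * (v i - v j)^2
      = ∑ i, ∑ j, ((W i j * (v i * v i) - W i j * (v i * v j))
          + (W i j * (v j * v j) - W i j * (v i * v j))) :=
    Finset.sum_congr rfl fun i _ => Finset.sum_congr rfl fun j _ => by ring
  rw [L1, R1]
  simp only [Finset.sum_add_distrib, Finset.sum_sub_distrib]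
  rw [key]
  ring

lemma dot_mulVec_le {N : ℕ} (L : Matrix (Fin N) (Fin N) ℝ) (v : Fin N → ℝ) :
    v ⬝ᵥ (L *ᵥ v) ≤ opNorm L * ∑ i, (v i)^2 := by
  set v' : EuclideanSpace ℝ (Fin N) := (WithLp.equiv 2 _).symm v with hv'
  have h1 : v ⬝ᵥ (L *ᵥ v) = inner ℝ v' (Matrix.toEuclideanCLM (𝕜 := ℝ) L v') := by
    rw [hv']
    simp [PiLp.inner_apply, dotProduct, Matrix.toLin'_apply, mul_comm]
  have h2 : inner ℝ v' (Matrix.toEuclideanCLM (𝕜 := ℝ) L v')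
      ≤ ‖v'‖ * ‖Matrix.toEuclideanCLM (𝕜 := ℝ) L v'‖ := real_inner_le_norm _ _
  have h3 : ‖Matrix.toEuclideanCLM (𝕜 := ℝ) L v'‖ ≤ opNorm L * ‖v'‖ :=
    ContinuousLinearMap.le_opNorm _ _
  have h4 : ‖v'‖ * ‖v'‖ = ∑ i, (v i)^2 := by
    rw [← real_inner_self_eq_norm_mul_norm]
    simp only [PiLp.inner_apply, hv', pow_two]
    simp [mul_comm]
    exact Finset.sum_congr rfl fun i _ => pow_two _
  have h5 : inner ℝ v' (Matrix.toEuclideanCLM (𝕜 := ℝ) L v') ≤ opNorm L * (‖v'‖ * ‖v'‖) :=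
    h2.trans (by nlinarith [norm_nonneg v', mul_le_mul_of_nonneg_left h3 (norm_nonneg v')])
  rw [h1]
  rw [h4] at h5
  exact h5

lemma young {t : ℝ} (ht : 0 < t) (p q : ℝ) : p * q ≤ t * p^2/2 + q^2/(2*t) := by
  rw [div_add_div _ _ (by norm_num) (by positivity), le_div_iff₀ (by positivity)]
  nlinarith [sq_nonneg (t*p - q)]

lemma quad_sub_le {N : ℕ} (W : Matrix (Fin N) (Fin N) ℝ) (hW : ∀ i j, 0 ≤ W i j)
    (hWB : IsWeightBalanced W) (xh e : Fin N → ℝ) :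
    (xh - e) ⬝ᵥ (lap W *ᵥ (xh - e))
      ≤ 2 * (xh ⬝ᵥ (lap W *ᵥ xh)) + 2 * (e ⬝ᵥ (lap W *ᵥ e)) := by
  rw [quad_eq W hWB, quad_eq W hWB, quad_eq W hWB]
  have h : ∑ i, ∑ j, W i j * ((xh - e) i - (xh - e) j)^2
      ≤ ∑ i, ∑ j, (2 * (W i j * (xh i - xh j)^2) + 2 * (W i j * (e i - e j)^2)) := by
    refine Finset.sum_le_sum fun i _ => Finset.sum_le_sum fun j _ => ?_
    simp only [Pi.sub_apply]
    nlinarith [mul_nonneg (hW i j) (sq_nonneg ((xh i - xh j) + (e i - e j)))]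
  have h2 : ∑ i, ∑ j, (2 * (W i j * (xh i - xh j)^2) + 2 * (W i j * (e i - e j)^2))
      = 2 * (∑ i, ∑ j, W i j * (xh i - xh j)^2) + 2 * (∑ i, ∑ j, W i j * (e i - e j)^2) := by
    simp only [Finset.sum_add_distrib, Finset.mul_sum]
  linarith [h, h2.le, h2.ge]

/-- Theorem 1, algebraic core: under the Algorithm-2 trigger
`eᵢ² ≤ Kᵢ uᵢ²` and the spectral-type bounds `μ x̂ᵀLx̂ ≤ ‖Lx̂‖² ≤ Λ x̂ᵀLx̂` with
`μ, Λ > 0`, setting `K = maxᵢ Kᵢ`, `m = minᵢ (1 − σᵢ)δᵢ`, and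
`A = −mμ/(1 + ‖L‖KΛ)`, one has `A < 0` and `xᵀLᵀu ≤ A · (1/2) xᵀLx`,
i.e. `V̇₂ ≤ A V₂` for `V₂(x) = (1/2) xᵀLᵀx` along `ẋ = u`. -/
theorem stmt15 {N : ℕ} (W : Matrix (Fin N) (Fin N) ℝ) (hW : ∀ i j, 0 ≤ W i j)
    (hWB : IsWeightBalanced W) (hd : ∀ i, 0 < outDeg W i)
    (xh e : Fin N → ℝ) (u : Fin N → ℝ) (hu : u = -(lap W *ᵥ xh))
    (b c : Fin N → ℝ) (hb : ∀ i, 0 < b i) (hc : ∀ i, 0 < c i)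
    (hδ : ∀ i, 0 < delta W b c i)
    (σ : Fin N → ℝ) (hσ : ∀ i, σ i ∈ Set.Ioo (0 : ℝ) 1)
    (htrig : ∀ i, e i^2 ≤
      (2 * σ i * delta W b c i * b i * c i / ((b i + c i) * outDeg W i)) * (u i)^2)
    (μ Λ : ℝ) (hμ : 0 < μ) (hΛ : 0 < Λ)
    (hLx₁ : μ * (xh ⬝ᵥ (lap W *ᵥ xh)) ≤ ∑ i, ((lap W *ᵥ xh) i)^2)
    (hLx₂ : ∑ i, ((lap W *ᵥ xh) i)^2 ≤ Λ * (xh ⬝ᵥ (lap W *ᵥ xh)))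
    (K : ℝ) (hK : IsGreatest
      (Set.range fun i =>
        2 * σ i * delta W b c i * b i * c i / ((b i + c i) * outDeg W i)) K)
    (m : ℝ) (hm : IsLeast (Set.range fun i => (1 - σ i) * delta W b c i) m)
    (A : ℝ) (hA : A = -(m * μ) / (1 + opNorm (lap W) * K * Λ)) :
    A < 0 ∧
    (lap W *ᵥ (xh - e)) ⬝ᵥ u ≤ A * ((1/2) * ((xh - e) ⬝ᵥ (lap W *ᵥ (xh - e)))) := by
  obtain ⟨⟨i₀, hi₀⟩, hmle⟩ := hm
  obtain ⟨⟨i₁, hi₁⟩, hKge⟩ := hK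
  have hmle' : ∀ i, m ≤ (1 - σ i) * delta W b c i := fun i =>
    hmle (Set.mem_range_self i)
  have hKge' : ∀ i,
      2 * σ i * delta W b c i * b i * c i / ((b i + c i) * outDeg W i) ≤ K :=
    fun i => hKge (Set.mem_range_self i)
  have hδσ : ∀ i, 0 < (1 - σ i) * delta W b c i := fun i =>
    mul_pos (by linarith [(hσ i).2]) (hδ i)
  have hmpos : 0 < m := hi₀ ▸ hδσ i₀
  have hKipos : ∀ i,
      0 < 2 * σ i * delta W b c i * b i * c i / ((b i + c i) * outDeg W i) := fun i =>
    div_pos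
      (mul_pos (mul_pos (mul_pos (mul_pos two_pos (hσ i).1) (hδ i)) (hb i)) (hc i))
      (mul_pos (by linarith [hb i, hc i]) (hd i))
  have hKpos : 0 < K := hi₁ ▸ hKipos i₁
  have hLnn : 0 ≤ opNorm (lap W) := norm_nonneg _
  have hden : 0 < 1 + opNorm (lap W) * K * Λ := by
    nlinarith [mul_nonneg (mul_nonneg hLnn hKpos.le) hΛ.le]
  have hAneg : A < 0 := by
    rw [hA]
    apply div_neg_of_neg_of_pos _ hden
    nlinarith
  refine ⟨hAneg, ?_⟩
  set z := lap W *ᵥ xh with hz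
  have hzu : ∀ i, z i = -u i := fun i => by simp [hu]
  have hsum_uz : ∑ i, (u i)^2 = ∑ i, (z i)^2 :=
    Finset.sum_congr rfl fun i _ => by rw [hzu i]; ring
  have hQnn : 0 ≤ xh ⬝ᵥ z := by
    have hzz : 0 ≤ ∑ i, (z i)^2 := Finset.sum_nonneg fun i _ => sq_nonneg _
    nlinarith [hLx₂]
  -- Step A : decomposition of the derivative
  have hS : (lap W *ᵥ (xh - e)) ⬝ᵥ u
      = ∑ i, ((-(u i)^2 - outDeg W i * (e i * u i)) + ∑ j, W i j * (e j * u i)) := by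
    have hsub : lap W *ᵥ (xh - e) = z - lap W *ᵥ e := by
      rw [hz]; exact Matrix.mulVec_sub _ _ _
    rw [hsub]
    simp only [dotProduct, Pi.sub_apply, lap_mulVec]
    refine Finset.sum_congr rfl fun i _ => ?_
    have hsm : (∑ j, W i j * e j) * u i = ∑ j, W i j * (e j * u i) := by
      rw [Finset.sum_mul]; exact Finset.sum_congr rfl fun j _ => by ring
    rw [hzu i, ← hsm]; ring
  -- Step B : Young inequalities
  have hYoung1 : ∀ i, -(u i)^2 - outDeg W i * (e i * u i)
      ≤ -(u i)^2 + outDeg W i * (b i * (u i)^2/2 + (e i)^2/(2*b i)) := by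
    intro i
    have h := young (hb i) (u i) (-(e i))
    rw [neg_sq] at h
    have h2 := mul_le_mul_of_nonneg_left h (hd i).le
    have h3 : -(outDeg W i * (e i * u i)) = outDeg W i * (u i * -(e i)) := by ring
    linarith [h2, h3.le, h3.ge]
  have hYoung2 : ∑ i, ∑ j, W i j * (e j * u i)
      ≤ ∑ i, ((∑ j, W i j * c j) * (u i)^2/2 + outDeg W i * ((e i)^2/(2*c i))) := by
    have step1 : ∑ i, ∑ j, W i j * (e j * u i)
        ≤ ∑ i, ∑ j, (W i j * (c j * (u i)^2/2) + W i j * ((e j)^2/(2*c j))) := by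
      refine Finset.sum_le_sum fun i _ => Finset.sum_le_sum fun j _ => ?_
      have h := young (hc j) (u i) (e j)
      calc W i j * (e j * u i) = W i j * (u i * e j) := by ring
        _ ≤ W i j * (c j * (u i)^2/2 + (e j)^2/(2*c j)) :=
            mul_le_mul_of_nonneg_left h (hW i j)
        _ = W i j * (c j * (u i)^2/2) + W i j * ((e j)^2/(2*c j)) := by ring
    refine step1.trans (le_of_eq ?_)
    simp only [Finset.sum_add_distrib]
    congr 1
    · refine Finset.sum_congr rfl fun i _ => ?_
      rw [Finset.sum_mul, Finset.sum_div]
      exact Finset.sum_congr rfl fun j _ => by ring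
    · rw [key_swap W hWB (fun t => (e t)^2/(2*c t))]
      refine Finset.sum_congr rfl fun i _ => ?_
      rw [← Finset.sum_mul]
      rfl
  -- Step C : per-node bound using the trigger
  have hper : ∀ i, (-(u i)^2 + outDeg W i * (b i * (u i)^2/2 + (e i)^2/(2*b i)))
      + ((∑ j, W i j * c j) * (u i)^2/2 + outDeg W i * ((e i)^2/(2*c i)))
      ≤ -(m * (u i)^2) := by
    intro i
    have hB := hb i; have hC := hc i; have hD := hd i
    have hδi := hδ i
    have hσ1 := (hσ i).1; have hσ2 := (hσ i).2
    have hcoef : 0 < outDeg W i * (b i + c i)/(2 * b i * c i) :=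
      div_pos (mul_pos hD (by linarith)) (by positivity)
    have hid : (-(u i)^2 + outDeg W i * (b i * (u i)^2/2 + (e i)^2/(2*b i)))
        + ((∑ j, W i j * c j) * (u i)^2/2 + outDeg W i * ((e i)^2/(2*c i)))
        = -(delta W b c i * (u i)^2)
          + (outDeg W i * (b i + c i)/(2 * b i * c i)) * (e i)^2 := by
      unfold delta
      field_simp
      ring
    have htr : (outDeg W i * (b i + c i)/(2 * b i * c i)) * (e i)^2
        ≤ σ i * delta W b c i * (u i)^2 := by
      have h := mul_le_mul_of_nonneg_left (htrig i) hcoef.le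
      refine h.trans (le_of_eq ?_)
      field_simp
    have hmm := mul_le_mul_of_nonneg_right (hmle' i) (sq_nonneg (u i))
    have hx : (1 - σ i) * delta W b c i * (u i)^2
        = delta W b c i * (u i)^2 - σ i * delta W b c i * (u i)^2 := by ring
    rw [hid]
    linarith [htr, hmm, hx.le, hx.ge]
  -- Step D : summing up
  have hstep1 : (lap W *ᵥ (xh - e)) ⬝ᵥ u ≤ -(m * ∑ i, (u i)^2) := by
    rw [hS]
    calc ∑ i, ((-(u i)^2 - outDeg W i * (e i * u i)) + ∑ j, W i j * (e j * u i))
        = (∑ i, (-(u i)^2 - outDeg W i * (e i * u i)))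
          + ∑ i, ∑ j, W i j * (e j * u i) := Finset.sum_add_distrib
      _ ≤ (∑ i, (-(u i)^2 + outDeg W i * (b i * (u i)^2/2 + (e i)^2/(2*b i))))
          + ∑ i, ((∑ j, W i j * c j) * (u i)^2/2 + outDeg W i * ((e i)^2/(2*c i))) :=
            add_le_add (Finset.sum_le_sum fun i _ => hYoung1 i) hYoung2
      _ = ∑ i, ((-(u i)^2 + outDeg W i * (b i * (u i)^2/2 + (e i)^2/(2*b i)))
          + ((∑ j, W i j * c j) * (u i)^2/2 + outDeg W i * ((e i)^2/(2*c i)))) :=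
            Finset.sum_add_distrib.symm
      _ ≤ ∑ i, -(m * (u i)^2) := Finset.sum_le_sum fun i _ => hper i
      _ = -(m * ∑ i, (u i)^2) := by rw [Finset.mul_sum]; exact Finset.sum_neg_distrib _
  have hstep2 : -(m * ∑ i, (u i)^2) ≤ -(m * μ * (xh ⬝ᵥ z)) := by
    rw [hsum_uz]
    have h := mul_le_mul_of_nonneg_left hLx₁ hmpos.le
    linarith
  -- Step E : bounding the Lyapunov function
  have hq2 : e ⬝ᵥ (lap W *ᵥ e) ≤ opNorm (lap W) * ∑ i, (e i)^2 := dot_mulVec_le _ _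
  have hq3 : ∑ i, (e i)^2 ≤ K * ∑ i, (u i)^2 := by
    rw [Finset.mul_sum]
    exact Finset.sum_le_sum fun i _ =>
      (htrig i).trans (mul_le_mul_of_nonneg_right (hKge' i) (sq_nonneg _))
  have hq4 : ∑ i, (u i)^2 ≤ Λ * (xh ⬝ᵥ z) := by rw [hsum_uz]; exact hLx₂
  have hq1 := quad_sub_le W hW hWB xh e
  have c1 : e ⬝ᵥ (lap W *ᵥ e) ≤ opNorm (lap W) * (K * (Λ * (xh ⬝ᵥ z))) := by
    calc e ⬝ᵥ (lap W *ᵥ e) ≤ opNorm (lap W) * ∑ i, (e i)^2 := hq2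
      _ ≤ opNorm (lap W) * (K * ∑ i, (u i)^2) := mul_le_mul_of_nonneg_left hq3 hLnn
      _ ≤ opNorm (lap W) * (K * (Λ * (xh ⬝ᵥ z))) :=
          mul_le_mul_of_nonneg_left (mul_le_mul_of_nonneg_left hq4 hKpos.le) hLnn
  have hstep3 : (1/2) * ((xh - e) ⬝ᵥ (lap W *ᵥ (xh - e)))
      ≤ (1 + opNorm (lap W) * K * Λ) * (xh ⬝ᵥ z) := by nlinarith [hq1, c1]
  -- Step F : conclusion
  have hABQ : A * ((1 + opNorm (lap W) * K * Λ) * (xh ⬝ᵥ z)) = -(m * μ * (xh ⬝ᵥ z)) := by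
    rw [hA]
    field_simp
  have hfin : A * ((1 + opNorm (lap W) * K * Λ) * (xh ⬝ᵥ z))
      ≤ A * ((1/2) * ((xh - e) ⬝ᵥ (lap W *ᵥ (xh - e)))) :=
    mul_le_mul_of_nonpos_left hstep3 hAneg.le
  linarith [hstep1, hstep2, hABQ.le, hABQ.ge, hfin]
end
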